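/- Let f : ℝⁿ → ℝ and G : ℝⁿ → S^m be twice continuously differentiable. Suppose (x,Y,Λ) ∈ ℝⁿ × S^m × S^m is a KKT triple of (P2) such that Y ∈ Φ(Λ), i.e., ⟨W∘W, Λ⟩ > 0 for every nonzero W ∈ S^m with Y∘W = 0. Then (x,Λ) is a KKT pair of (P1) satisfying strict complementarity: rank G(x) + rank Λ = m. -/

import Mathlib

open Matrix

noncomputable section

def jmul {m : ℕ} (A B : Matrix (Fin m) (Fin m) ℝ) : Matrix (Fin m) (Fin m) ℝ :=
  (1 / 2 : ℝ) • (A * B + B * A)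

def minner {m : ℕ} (A B : Matrix (Fin m) (Fin m) ℝ) : ℝ :=
  (A * B).trace

def memPhi {m : ℕ} (Λ Y : Matrix (Fin m) (Fin m) ℝ) : Prop :=
  ∀ W : Matrix (Fin m) (Fin m) ℝ, W.IsSymm → W ≠ 0 → jmul Y W = 0 →
    0 < minner (jmul W W) Λ

def pderivG {n m : ℕ} (G : (Fin n → ℝ) → Matrix (Fin m) (Fin m) ℝ)
    (x : Fin n → ℝ) (k : Fin n) : Matrix (Fin m) (Fin m) ℝ :=
  Matrix.of fun i j => fderiv ℝ (fun y => G y i j) x (Pi.single k 1)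

def dirDerivG {n m : ℕ} (G : (Fin n → ℝ) → Matrix (Fin m) (Fin m) ℝ)
    (x v : Fin n → ℝ) : Matrix (Fin m) (Fin m) ℝ :=
  ∑ k, v k • pderivG G x k

def adjDG {n m : ℕ} (G : (Fin n → ℝ) → Matrix (Fin m) (Fin m) ℝ)
    (x : Fin n → ℝ) (W : Matrix (Fin m) (Fin m) ℝ) : Fin n → ℝ :=
  fun k => minner (pderivG G x k) W

def gradf {n : ℕ} (f : (Fin n → ℝ) → ℝ) (x : Fin n → ℝ) : Fin n → ℝ :=
  fun k => fderiv ℝ f x (Pi.single k 1)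

def KKT1 {n m : ℕ} (f : (Fin n → ℝ) → ℝ) (G : (Fin n → ℝ) → Matrix (Fin m) (Fin m) ℝ)
    (x : Fin n → ℝ) (Λ : Matrix (Fin m) (Fin m) ℝ) : Prop :=
  gradf f x = adjDG G x Λ ∧ Λ.PosSemidef ∧ (G x).PosSemidef ∧ jmul Λ (G x) = 0

def KKT2 {n m : ℕ} (f : (Fin n → ℝ) → ℝ) (G : (Fin n → ℝ) → Matrix (Fin m) (Fin m) ℝ)
    (x : Fin n → ℝ) (Y Λ : Matrix (Fin m) (Fin m) ℝ) : Prop :=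
  gradf f x = adjDG G x Λ ∧ jmul Λ Y = 0 ∧ G x = jmul Y Y

def hessQ {n m : ℕ} (f : (Fin n → ℝ) → ℝ) (G : (Fin n → ℝ) → Matrix (Fin m) (Fin m) ℝ)
    (Λ : Matrix (Fin m) (Fin m) ℝ) (x v : Fin n → ℝ) : ℝ :=
  iteratedFDeriv ℝ 2 (fun y => f y - minner (G y) Λ) x ![v, v]

def SOSCNLP {n m : ℕ} (f : (Fin n → ℝ) → ℝ) (G : (Fin n → ℝ) → Matrix (Fin m) (Fin m) ℝ)
    (x : Fin n → ℝ) (Y Λ : Matrix (Fin m) (Fin m) ℝ) : Prop :=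
  ∀ (v : Fin n → ℝ) (W : Matrix (Fin m) (Fin m) ℝ), W.IsSymm →
    ¬(v = 0 ∧ W = 0) → dirDerivG G x v = (2 : ℝ) • jmul Y W →
    0 < hessQ f G Λ x v + 2 * minner (jmul W W) Λ

def SONCNLP {n m : ℕ} (f : (Fin n → ℝ) → ℝ) (G : (Fin n → ℝ) → Matrix (Fin m) (Fin m) ℝ)
    (x : Fin n → ℝ) (Y Λ : Matrix (Fin m) (Fin m) ℝ) : Prop :=
  ∀ (v : Fin n → ℝ) (W : Matrix (Fin m) (Fin m) ℝ), W.IsSymm →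
    dirDerivG G x v = (2 : ℝ) • jmul Y W →
    0 ≤ hessQ f G Λ x v + 2 * minner (jmul W W) Λ

def LICQ {n m : ℕ} (G : (Fin n → ℝ) → Matrix (Fin m) (Fin m) ℝ)
    (x : Fin n → ℝ) (Y : Matrix (Fin m) (Fin m) ℝ) : Prop :=
  ∀ W : Matrix (Fin m) (Fin m) ℝ, W.IsSymm → jmul Y W = 0 → adjDG G x W = 0 → W = 0

def Nondeg {n m : ℕ} (G : (Fin n → ℝ) → Matrix (Fin m) (Fin m) ℝ)
    (x : Fin n → ℝ) : Prop :=
  ∀ W : Matrix (Fin m) (Fin m) ℝ, W.IsSymm → G x * W = 0 → adjDG G x W = 0 → W = 0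

def CritCone {n m : ℕ} (f : (Fin n → ℝ) → ℝ) (G : (Fin n → ℝ) → Matrix (Fin m) (Fin m) ℝ)
    (x : Fin n → ℝ) : Set (Fin n → ℝ) :=
  {d | (∀ u : Fin m → ℝ, G x *ᵥ u = 0 → 0 ≤ u ⬝ᵥ (dirDerivG G x d *ᵥ u)) ∧
    gradf f x ⬝ᵥ d = 0}

def IsMPInv {m : ℕ} (A P : Matrix (Fin m) (Fin m) ℝ) : Prop :=
  A * P * A = A ∧ P * A * P = P ∧ (A * P)ᵀ = A * P ∧ (P * A)ᵀ = P * A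

def Hmat {n m : ℕ} (G : (Fin n → ℝ) → Matrix (Fin m) (Fin m) ℝ)
    (x : Fin n → ℝ) (Λ P : Matrix (Fin m) (Fin m) ℝ) : Matrix (Fin n) (Fin n) ℝ :=
  Matrix.of fun i j => 2 * (pderivG G x i * P * pderivG G x j * Λ).trace

/-!
Write `Λ ∘ Y = 0` as `YΛ = -ΛY`. Then `W = YΛY` is symmetric and anticommutes with `Y`, and
`tr(W²Λ) = tr(AY)` for a matrix `A` anticommuting with `Y`, so `tr(W²Λ) = -tr(W²Λ) = 0`.
Hence `Y ∈ Φ(Λ)` forces `W = -ΛY² = 0`, and `(ΛY)(ΛY)ᵀ = ΛY²Λ = 0` gives `ΛY = 0`.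
For `w ∈ ker Y` the rank-one matrix `wwᵀ` is admissible in `Φ(Λ)`, so `wᵀΛw > 0`.
Thus `range Y ⊆ ker Λ` and `ker Λ ∩ ker Y = 0`, which makes `ker Λ` and `ker Y` complementary:
this gives `rank Y + rank Λ = m`, and `Λ ⪰ 0` because `Λ` is positive on `ker Y`.
Finally `G(x) = Y²` is positive semidefinite of rank `rank Y`, and `Λ ∘ G(x) = 0`.
-/
theorem Matrix.trace_mul_eq_zero_of_anticommute {ι R : Type*} [Fintype ι] [CommRing R]
    [NoZeroDivisors R] [CharZero R] {A Y : Matrix ι ι R} (h : Y * A = -(A * Y)) :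
    trace (A * Y) = 0 := by
  have : trace (A * Y) = -trace (A * Y) := by rw [← trace_neg, ← h, trace_mul_comm]
  exact self_eq_neg.mp this

theorem LinearMap.isCompl_ker_of_range_le_ker {K V W : Type*} [Field K] [AddCommGroup V]
    [Module K V] [FiniteDimensional K V] [AddCommGroup W] [Module K W]
    {f : V →ₗ[K] W} {g : V →ₗ[K] V} (hfg : range g ≤ ker f) (hdisj : Disjoint (ker f) (ker g)) :
    IsCompl (ker f) (ker g) := by
  refine (Submodule.isCompl_iff_disjoint _ _ ?_).mpr hdisj
  have := g.finrank_range_add_finrank_ker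
  have := Submodule.finrank_mono hfg
  omega

theorem LinearMap.finrank_range_add_finrank_range_of_isCompl_ker {K V W₁ W₂ : Type*} [Field K]
    [AddCommGroup V] [Module K V] [FiniteDimensional K V] [AddCommGroup W₁] [Module K W₁]
    [AddCommGroup W₂] [Module K W₂] {f : V →ₗ[K] W₁} {g : V →ₗ[K] W₂}
    (h : IsCompl (ker f) (ker g)) :
    Module.finrank K (range f) + Module.finrank K (range g) = Module.finrank K V := by
  have := Submodule.finrank_add_eq_of_isCompl h
  have := f.finrank_range_add_finrank_ker
  have := g.finrank_range_add_finrank_ker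
  omega

theorem Matrix.posSemidef_of_sup_ker_eq_top {ι : Type*} [Fintype ι] {Λ : Matrix ι ι ℝ}
    (hΛ : Λ.IsSymm) {S : Submodule ℝ (ι → ℝ)} (hS : S ⊔ LinearMap.ker Λ.mulVecLin = ⊤)
    (hpos : ∀ w ∈ S, 0 ≤ w ⬝ᵥ (Λ *ᵥ w)) : Λ.PosSemidef := by
  refine posSemidef_iff_dotProduct_mulVec.mpr ⟨isHermitian_iff_isSymm.mpr hΛ, fun z => ?_⟩
  obtain ⟨w, hw, k, hk, rfl⟩ := Submodule.mem_sup.mp (hS ▸ Submodule.mem_top : z ∈ S ⊔ _)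
  have hΛk : Λ *ᵥ k = 0 := hk
  have hkΛ : k ᵥ* Λ = 0 := by rw [← mulVec_transpose, hΛ.eq, hΛk]
  simpa [mulVec_add, hΛk, add_dotProduct, dotProduct_mulVec k, hkΛ] using hpos w hw

section
variable {m : ℕ}

theorem jmul_eq_zero_iff {A B : Matrix (Fin m) (Fin m) ℝ} : jmul A B = 0 ↔ A * B + B * A = 0 := by
  rw [jmul, smul_eq_zero]; norm_num

theorem jmul_self (A : Matrix (Fin m) (Fin m) ℝ) : jmul A A = A * A := by
  rw [jmul]; module

variable {Y Λ : Matrix (Fin m) (Fin m) ℝ}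

theorem memPhi.dotProduct_mulVec_pos (hPhi : memPhi Λ Y) (hY : Y.IsSymm) {w : Fin m → ℝ}
    (hw : Y *ᵥ w = 0) (hw0 : w ≠ 0) : 0 < w ⬝ᵥ (Λ *ᵥ w) := by
  have hwY : w ᵥ* Y = 0 := by rw [← mulVec_transpose, hY.eq, hw]
  have hpos := hPhi (vecMulVec w w) (transpose_vecMulVec w w) (vecMulVec_ne_zero hw0 hw0)
    (by rw [jmul_eq_zero_iff, mul_vecMulVec, vecMulVec_mul, hw, hwY]; simp)
  rw [minner, jmul_self, vecMulVec_mul_vecMulVec, vecMulVec_mul, trace_vecMulVec, smul_vecMul,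
    dotProduct_smul, smul_eq_mul, dotProduct_comm w (w ᵥ* Λ), ← dotProduct_mulVec] at hpos
  exact pos_of_mul_pos_right hpos (by simpa using dotProduct_star_self_nonneg w)

theorem memPhi.mul_eq_zero (hPhi : memPhi Λ Y) (hY : Y.IsSymm) (hΛ : Λ.IsSymm)
    (hanti : Λ * Y + Y * Λ = 0) : Λ * Y = 0 := by
  have hYΛ : Y * Λ = -(Λ * Y) := eq_neg_of_add_eq_zero_right hanti
  have hmoveY : ∀ X, X * Y * Λ = -(X * Λ * Y) := fun X => by rw [mul_assoc, hYΛ, mul_neg, mul_assoc]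
  set W := Y * Λ * Y with hW
  have hWsymm : W.IsSymm := by simp [W, IsSymm, transpose_mul, hY.eq, hΛ.eq, mul_assoc]
  have hWY : jmul Y W = 0 := by
    rw [jmul_eq_zero_iff]
    simp only [W, ← mul_assoc, hYΛ, neg_mul, mul_neg, neg_neg, add_neg_cancel]
  have htr : minner (jmul W W) Λ = 0 := by
    rw [minner, jmul_self, trace_mul_comm, show Λ * (W * W) = Λ * W * Y * Λ * Y by
      simp only [W, mul_assoc]]
    apply trace_mul_eq_zero_of_anticommute
    simp only [W, ← mul_assoc, hYΛ, hmoveY, neg_mul, mul_neg, neg_neg]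
  have hW0 : W = 0 := by
    by_contra h
    exact (hPhi W hWsymm h hWY).ne' htr
  have hΛYY : Λ * Y * Y = 0 := by rwa [hW, hYΛ, neg_mul, neg_eq_zero] at hW0
  rw [← self_mul_conjTranspose_eq_zero, conjTranspose_eq_transpose_of_trivial, transpose_mul,
    hY.eq, hΛ.eq, ← mul_assoc, hΛYY, zero_mul]

theorem memPhi.isCompl_ker (hPhi : memPhi Λ Y) (hY : Y.IsSymm) (hΛY : Λ * Y = 0) :
    IsCompl (LinearMap.ker Λ.mulVecLin) (LinearMap.ker Y.mulVecLin) := by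
  refine LinearMap.isCompl_ker_of_range_le_ker ?_ ?_
  · rintro _ ⟨w, rfl⟩
    simp [mulVec_mulVec, hΛY]
  · refine Submodule.disjoint_def.mpr fun w (hΛw : Λ *ᵥ w = 0) (hYw : Y *ᵥ w = 0) => ?_
    by_contra hw0
    simpa [hΛw] using hPhi.dotProduct_mulVec_pos hY hYw hw0

end

theorem stmt7_general {n m : ℕ} (f : (Fin n → ℝ) → ℝ) (G : (Fin n → ℝ) → Matrix (Fin m) (Fin m) ℝ)
    (x : Fin n → ℝ) (Y Λ : Matrix (Fin m) (Fin m) ℝ)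
    (hY : Y.IsSymm) (hΛ : Λ.IsSymm) (hKKT : KKT2 f G x Y Λ) (hPhi : memPhi Λ Y) :
    KKT1 f G x Λ ∧ (G x).rank + Λ.rank = m := by
  obtain ⟨hgrad, hanti, hGY⟩ := hKKT
  have hG : G x = Yᵀ * Y := by rw [hGY, jmul_self, hY.eq]
  have hΛY : Λ * Y = 0 := hPhi.mul_eq_zero hY hΛ (jmul_eq_zero_iff.mp hanti)
  have hYΛ : Y * Λ = 0 := by simpa [transpose_mul, hY.eq, hΛ.eq] using congrArg transpose hΛY
  have hcompl := hPhi.isCompl_ker hY hΛY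
  refine ⟨⟨hgrad, ?_, ?_, ?_⟩, ?_⟩
  · refine posSemidef_of_sup_ker_eq_top hΛ (codisjoint_iff.mp hcompl.symm.codisjoint) ?_
    intro w (hw : Y *ᵥ w = 0)
    rcases eq_or_ne w 0 with rfl | hw0
    · simp
    · exact (hPhi.dotProduct_mulVec_pos hY hw hw0).le
  · simpa [hG] using posSemidef_conjTranspose_mul_self Y
  · rw [hG, hY.eq, jmul, ← mul_assoc, hΛY, mul_assoc, hYΛ]
    simp
  · have hrank : Λ.rank + Y.rank = m := by
      simpa [Matrix.rank] using LinearMap.finrank_range_add_finrank_range_of_isCompl_ker hcompl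
    rw [hG, rank_transpose_mul_self, add_comm, hrank]

theorem stmt7 {n m : ℕ} (f : (Fin n → ℝ) → ℝ) (G : (Fin n → ℝ) → Matrix (Fin m) (Fin m) ℝ)
    (hf : ContDiff ℝ 2 f) (hG : ∀ i j, ContDiff ℝ 2 fun y => G y i j)
    (x : Fin n → ℝ) (Y Λ : Matrix (Fin m) (Fin m) ℝ)
    (hY : Y.IsSymm) (hΛ : Λ.IsSymm) (hKKT : KKT2 f G x Y Λ) (hPhi : memPhi Λ Y) :
    KKT1 f G x Λ ∧ (G x).rank + Λ.rank = m :=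
  stmt7_general f G x Y Λ hY hΛ hKKT hPhi
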